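/- arXiv:2012.03185 — 2 statements merged into one kernel-verified Lean document; each statement's English description precedes it below -/
import Mathlib

section
/- Every connected cograph G on n vertices admits a spanning tree of depth two rooted at some vertex ρ such that every vertex at depth one has at most one child. -/
/-!
A finite cograph with at least two vertices is a join or a disjoint union: delete a vertex `x`,
split the rest by induction, and use the absence of induced `P₄`s through `x` to place `x`. A
connected cograph is therefore the join of two nonempty sets `A` and `B`, and after swapping them
there is an injection `A ↪ B`. Root the tree at some `ρ ∈ A`, hang every other vertex of `A` below
its image in `B`, and hang every vertex of `B` directly below `ρ`.
-/

open SimpleGraph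

def IsCograph {V : Type*} (G : SimpleGraph V) : Prop :=
  IsEmpty (SimpleGraph.pathGraph 4 ↪g G)

def AreTwins {V : Type*} (G : SimpleGraph V) (u v : V) : Prop :=
  u ≠ v ∧ (G.neighborSet u = G.neighborSet v ∨
    insert u (G.neighborSet u) = insert v (G.neighborSet v))

def DistHereditary {V : Type*} (G : SimpleGraph V) : Prop :=
  ∀ s : Set V, (G.induce s).Connected →
    ∀ u v : s, (G.induce s).dist u v = G.dist u v

section

variable {V : Type*} {G : SimpleGraph V}

namespace IsCograph

theorem adj_of_adj_of_adj_of_adj (hG : IsCograph G) {a b c d : V} (hab : G.Adj a b)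
    (hbc : G.Adj b c) (hcd : G.Adj c d) (hac : ¬ G.Adj a c) (hbd : ¬ G.Adj b d) :
    G.Adj a d := by
  by_contra had
  have hac' : a ≠ c := by rintro rfl; exact had hcd
  have hbd' : b ≠ d := by rintro rfl; exact had hab
  have had' : a ≠ d := by rintro rfl; exact hac hcd.symm
  refine hG.false ⟨⟨![a, b, c, d], fun i j hij => ?_⟩, fun {i j} => ?_⟩
  · fin_cases i <;> fin_cases j <;>
      simp_all [hab.ne, hbc.ne, hcd.ne, hab.ne', hbc.ne', hcd.ne', hac'.symm, hbd'.symm, had'.symm]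
  · change G.Adj (![a, b, c, d] i) (![a, b, c, d] j) ↔ (pathGraph 4).Adj i j
    fin_cases i <;> fin_cases j <;>
      simp [pathGraph_adj, hab, hbc, hcd, hab.symm, hbc.symm, hcd.symm, hac, hbd, had,
        mt G.adj_symm hac, mt G.adj_symm hbd, mt G.adj_symm had]

theorem induce (hG : IsCograph G) (s : Set V) : IsCograph (G.induce s) :=
  ⟨fun e => hG.false ((Embedding.induce s).comp e)⟩

/-- The complement of the path `0-1-2-3` is the path `1-3-0-2`. -/
theorem compl (hG : IsCograph G) : IsCograph Gᶜ := by
  refine ⟨fun e => ?_⟩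
  have adj (i j : Fin 4) (h : (pathGraph 4).Adj i j := by simp [pathGraph_adj]) :
      Gᶜ.Adj (e i) (e j) :=
    e.map_adj_iff.2 h
  have nadj (i j : Fin 4) (h : i ≠ j ∧ ¬ (pathGraph 4).Adj i j := by simp [pathGraph_adj]) :
      G.Adj (e i) (e j) := by
    by_contra hG'
    exact h.2 (e.map_adj_iff.1 ⟨e.injective.ne h.1, hG'⟩)
  exact (adj 1 2).2 <|
    hG.adj_of_adj_of_adj_of_adj (nadj 1 3) (nadj 3 0) (nadj 0 2) (adj 1 0).2 (adj 3 2).2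

end IsCograph

namespace SimpleGraph

def IsJoinPartition (G : SimpleGraph V) (A : Set V) : Prop :=
  A.Nonempty ∧ Aᶜ.Nonempty ∧ ∀ a ∈ A, ∀ b ∉ A, G.Adj a b

/-- `G` is a join, or (a join in `Gᶜ`) a disjoint union. -/
def IsDecomposable (G : SimpleGraph V) : Prop :=
  ∃ A, G.IsJoinPartition A ∨ Gᶜ.IsJoinPartition A

theorem IsJoinPartition.compl {A : Set V} (hA : G.IsJoinPartition A) : G.IsJoinPartition Aᶜ :=
  ⟨hA.2.1, by simpa using hA.1, fun a ha b hb => (hA.2.2 b (not_not.1 hb) a ha).symm⟩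

theorem isJoinPartition_singleton {x y : V} (hyx : y ≠ x) (hx : ∀ z ≠ x, G.Adj x z) :
    G.IsJoinPartition {x} :=
  ⟨Set.singleton_nonempty x, ⟨y, hyx⟩, fun _ ha b hb => ha ▸ hx b hb⟩

theorem IsDecomposable.of_compl (h : Gᶜ.IsDecomposable) : G.IsDecomposable := by
  obtain ⟨A, hA⟩ := h
  rw [compl_compl] at hA
  exact ⟨A, hA.symm⟩

theorem Preconnected.not_isJoinPartition_compl (hG : G.Preconnected) (A : Set V) :
    ¬ Gᶜ.IsJoinPartition A := by
  rintro ⟨⟨a, ha⟩, ⟨b, hb⟩, hA⟩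
  obtain ⟨d, -, hd, hd'⟩ := (hG a b).some.exists_boundary_dart A ha hb
  exact (hA _ hd _ hd').2 d.adj

theorem induce_compl (s : Set V) : (G.induce s)ᶜ = Gᶜ.induce s := by
  ext a b
  simp [Subtype.ext_iff]

/-- `parent` encodes a spanning tree of `G` rooted at `ρ` of depth at most two in which every
vertex of depth one has at most one child. -/
def IsSpiderParent (G : SimpleGraph V) (ρ : V) (parent : V → V) : Prop :=
  parent ρ = ρ ∧
    (∀ v, v ≠ ρ → G.Adj v (parent v)) ∧
    (∀ v, v ≠ ρ → parent (parent v) = ρ) ∧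
    (∀ u v, parent u = parent v → parent u ≠ ρ → u = v)

theorem IsJoinPartition.exists_isSpiderParent_of_embedding {A : Set V}
    (hA : G.IsJoinPartition A) (f : A ↪ ↥Aᶜ) : ∃ ρ parent, G.IsSpiderParent ρ parent := by
  classical
  obtain ⟨⟨ρ, hρ⟩, -, hjoin⟩ := hA
  let parent v := if h : v ∈ A ∧ v ≠ ρ then (f ⟨v, h.1⟩ : V) else ρ
  have parent_eq_image {v} (h : v ∈ A ∧ v ≠ ρ) : parent v = f ⟨v, h.1⟩ := dif_pos h
  have parent_eq_root {v} (h : ¬ (v ∈ A ∧ v ≠ ρ)) : parent v = ρ := dif_neg h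
  have image_notMem (v : A) : (f v : V) ∉ A := (f v).2
  refine ⟨ρ, parent, parent_eq_root (by simp), fun v hv => ?_, fun v hv => ?_,
    fun u v huv hu => ?_⟩
  · by_cases h : v ∈ A
    · rw [parent_eq_image ⟨h, hv⟩]
      exact hjoin v h _ (image_notMem _)
    · rw [parent_eq_root (by tauto)]
      exact (hjoin ρ hρ v h).symm
  · by_cases h : v ∈ A ∧ v ≠ ρ
    · rw [parent_eq_image h, parent_eq_root (by tauto)]
    · rw [parent_eq_root h, parent_eq_root (by simp)]
  · have mem_of_parent_ne {w} (h : parent w ≠ ρ) : w ∈ A ∧ w ≠ ρ :=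
      not_not.1 fun h' => h (parent_eq_root h')
    have hu' := mem_of_parent_ne hu
    have hv' := mem_of_parent_ne (huv ▸ hu)
    rw [parent_eq_image hu', parent_eq_image hv'] at huv
    exact congrArg Subtype.val (f.injective (Subtype.ext huv))

theorem IsJoinPartition.exists_isSpiderParent {A : Set V} (hA : G.IsJoinPartition A) :
    ∃ ρ parent, G.IsSpiderParent ρ parent := by
  obtain ⟨⟨f⟩⟩ | ⟨⟨f⟩⟩ := Function.Embedding.total A ↥Aᶜ
  · exact hA.exists_isSpiderParent_of_embedding f
  · exact hA.compl.exists_isSpiderParent_of_embedding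
      (f.trans (Set.embeddingOfSubset _ _ (compl_compl A).ge))

end SimpleGraph

namespace IsCograph

theorem isDecomposable_of_join_off_vertex {x : V} {S : Set V} (hG : IsCograph G) (hxS : x ∉ S)
    (hS : S.Nonempty) (hT : ∃ t ∉ S, t ≠ x) (hjoin : ∀ s ∈ S, ∀ t ∉ S, t ≠ x → G.Adj s t) :
    G.IsDecomposable := by
  by_cases hxT : ∀ t ∉ S, t ≠ x → G.Adj x t
  · obtain ⟨t, htS, htx⟩ := hT
    refine ⟨(insert x S)ᶜ, Or.inl ⟨⟨t, by simp [htS, htx]⟩, ⟨x, by simp⟩, fun a ha b hb => ?_⟩⟩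
    simp only [Set.mem_compl_iff, Set.mem_insert_iff, not_or] at ha
    rw [Set.notMem_compl_iff, Set.mem_insert_iff] at hb
    rcases hb with rfl | hb
    · exact (hxT a ha.2 ha.1).symm
    · exact (hjoin b hb a ha.2 ha.1).symm
  by_cases hxS' : ∀ s ∈ S, G.Adj x s
  · refine ⟨S, Or.inl ⟨hS, ⟨x, hxS⟩, fun a ha b hb => ?_⟩⟩
    obtain rfl | hbx := eq_or_ne b x
    · exact (hxS' a ha).symm
    · exact hjoin a ha b hb hbx
  push Not at hxT hxS'
  obtain ⟨t₀, ht₀S, ht₀x, hxt₀⟩ := hxT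
  obtain ⟨s₀, hs₀S, hxs₀⟩ := hxS'
  -- If `a ≁ b` they lie on the same side, and `t₀` or `s₀` on the other gives a `P₄` from `x`.
  have adj_of_adj_of_not_adj : ∀ a, G.Adj x a → ∀ b ≠ x, ¬ G.Adj x b → G.Adj a b := by
    intro a hxa b hbx hxb
    by_contra hab
    by_cases haS : a ∈ S <;> by_cases hbS : b ∈ S
    · exact hxb (hG.adj_of_adj_of_adj_of_adj hxa (hjoin a haS t₀ ht₀S ht₀x)
        (hjoin b hbS t₀ ht₀S ht₀x).symm hxt₀ hab)
    · exact hab (hjoin a haS b hbS hbx)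
    · exact hab (hjoin b hbS a haS hxa.ne').symm
    · exact hxb (hG.adj_of_adj_of_adj_of_adj hxa (hjoin s₀ hs₀S a haS hxa.ne').symm
        (hjoin s₀ hs₀S b hbS hbx) hxs₀ hab)
  by_cases hN : ∃ a, G.Adj x a
  · refine ⟨G.neighborSet x, Or.inl ⟨hN, ⟨x, G.irrefl⟩, fun a ha b hb => ?_⟩⟩
    obtain rfl | hbx := eq_or_ne b x
    · exact ha.symm
    · exact adj_of_adj_of_not_adj a ha b hbx hb
  · push Not at hN
    exact ⟨{x}, Or.inr (isJoinPartition_singleton (ne_of_mem_of_not_mem hs₀S hxS)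
      fun z hz => (compl_adj G x z).2 ⟨hz.symm, hN z⟩)⟩

theorem isDecomposable_of_isJoinPartition_induce (hG : IsCograph G) {x : V}
    {A : Set ({x}ᶜ : Set V)} (hA : (G.induce {x}ᶜ).IsJoinPartition A) : G.IsDecomposable := by
  obtain ⟨⟨s, hs⟩, ⟨t, ht⟩, hjoin⟩ := hA
  refine hG.isDecomposable_of_join_off_vertex (S := Subtype.val '' A) ?_ ⟨s, s, hs, rfl⟩
    ⟨t, ?_, t.2⟩ ?_
  · rintro ⟨y, -, hy⟩
    exact y.2 hy
  · rintro ⟨y, hy, hyt⟩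
    exact ht (Subtype.ext hyt ▸ hy)
  · rintro _ ⟨a, ha, rfl⟩ b hb hbx
    exact hjoin a ha ⟨b, hbx⟩ fun h => hb ⟨_, h, rfl⟩

theorem isDecomposable [Finite V] [Nontrivial V] (hG : IsCograph G) : G.IsDecomposable := by
  suffices ∀ (W : Type _) [Finite W] [Nontrivial W] (H : SimpleGraph W), IsCograph H →
      H.IsDecomposable from this V G hG
  intro W _
  induction W using Finite.induction_subsingleton_or_nontrivial with
  | hbase W => intro h; exact (not_nontrivial W h).elim
  | hstep W ih =>
    intro _ G hG
    obtain ⟨x⟩ := ‹Nontrivial W›.to_nonempty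
    rcases subsingleton_or_nontrivial ({x}ᶜ : Set W) with hs | hs
    · obtain ⟨y, hyx⟩ := exists_ne x
      have hsub (z) (hz : z ≠ x) : z = y :=
        congrArg Subtype.val (Subsingleton.elim (⟨z, hz⟩ : ({x}ᶜ : Set W)) ⟨y, hyx⟩)
      by_cases hxy : G.Adj x y
      · exact ⟨{x}, Or.inl (isJoinPartition_singleton hyx fun z hz => hsub z hz ▸ hxy)⟩
      · exact ⟨{x}, Or.inr (isJoinPartition_singleton hyx fun z hz =>
          hsub z hz ▸ (compl_adj G x y).2 ⟨hyx.symm, hxy⟩)⟩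
    · obtain ⟨A, hA | hA⟩ :=
        ih _ (Finite.card_subtype_lt (p := (· ∈ ({x}ᶜ : Set W))) fun h => h rfl) _ (hG.induce _)
      · exact hG.isDecomposable_of_isJoinPartition_induce hA
      · rw [induce_compl] at hA
        exact (hG.compl.isDecomposable_of_isJoinPartition_induce hA).of_compl

end IsCograph

end

theorem stmt1 {V : Type*} [Fintype V] [Nonempty V] (G : SimpleGraph V)
    (hconn : G.Connected) (hco : IsCograph G) :
    ∃ (ρ : V) (parent : V → V),
      parent ρ = ρ ∧
      (∀ v, v ≠ ρ → G.Adj v (parent v)) ∧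
      (∀ v, v ≠ ρ → parent (parent v) = ρ) ∧
      (∀ u v, parent u = parent v → parent u ≠ ρ → u = v) := by
  rcases subsingleton_or_nontrivial V with _ | _
  · obtain ⟨ρ⟩ := ‹Nonempty V›
    exact ⟨ρ, id, rfl, by simp [Subsingleton.elim _ ρ]⟩
  · obtain ⟨A, hA | hA⟩ := hco.isDecomposable
    · exact hA.exists_isSpiderParent
    · exact absurd hA (hconn.preconnected.not_isJoinPartition_compl A)
end

section
/- Let G = (V, E) be a graph, (φ_w)_{w∈V} a linearly independent family of polynomials over Z_p, q_w = Σ_{w'∈N(w)} φ_{w'}, and t ∈ Z_p. Suppose u, v are twins in G with φ_u(t) ≠ φ_v(t). Then u and v are adjacent if and only if φ_u(t) + q_u(t) = φ_v(t) + q_v(t). -/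
open SimpleGraph

namespace AreTwins

variable {V : Type*} {G : SimpleGraph V} {u v : V}

theorem insert_neighborSet_eq_of_adj (h : AreTwins G u v) (hadj : G.Adj u v) :
    insert u (G.neighborSet u) = insert v (G.neighborSet v) := by
  refine h.2.resolve_left fun hopen => G.irrefl (?_ : G.Adj v v)
  rw [← mem_neighborSet, ← hopen]
  exact hadj

theorem neighborSet_eq_of_not_adj (h : AreTwins G u v) (hadj : ¬G.Adj u v) :
    G.neighborSet u = G.neighborSet v := by
  refine h.2.resolve_right fun hclosed => ?_
  have hu : u ∈ insert v (G.neighborSet v) := hclosed ▸ Set.mem_insert u _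
  rcases hu with rfl | hvu
  · exact h.1 rfl
  · exact hadj hvu.symm

theorem adj_iff_add_sum_neighborFinset_eq {M : Type*} [AddCancelCommMonoid M]
    [G.LocallyFinite] (h : AreTwins G u v) (f : V → M) (hf : f u ≠ f v) :
    G.Adj u v ↔
      f u + ∑ w ∈ G.neighborFinset u, f w = f v + ∑ w ∈ G.neighborFinset v, f w := by
  classical
  constructor
  · intro hadj
    have hclosed : insert u (G.neighborFinset u) = insert v (G.neighborFinset v) := by
      apply Finset.coe_injective
      simpa only [Finset.coe_insert, coe_neighborFinset] using
        h.insert_neighborSet_eq_of_adj hadj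
    rw [← Finset.sum_insert (G.notMem_neighborFinset_self u),
      ← Finset.sum_insert (G.notMem_neighborFinset_self v), hclosed]
  · intro hsum
    by_contra hadj
    have hopen : G.neighborFinset u = G.neighborFinset v := by
      apply Finset.coe_injective
      simpa only [coe_neighborFinset] using h.neighborSet_eq_of_not_adj hadj
    rw [hopen] at hsum
    exact hf (add_right_cancel hsum)

end AreTwins

theorem stmt11_general {V : Type*} [Fintype V] (G : SimpleGraph V) [DecidableRel G.Adj]
    (p : ℕ) (φ : V → Polynomial (ZMod p))
    (t : ZMod p) (u v : V)
    (htwin : AreTwins G u v)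
    (hne : (φ u).eval t ≠ (φ v).eval t) :
    G.Adj u v ↔
      (φ u).eval t + ∑ w' ∈ G.neighborFinset u, (φ w').eval t =
      (φ v).eval t + ∑ w' ∈ G.neighborFinset v, (φ w').eval t :=
  htwin.adj_iff_add_sum_neighborFinset_eq (fun w => (φ w).eval t) hne

theorem stmt11 {V : Type*} [Fintype V] (G : SimpleGraph V) [DecidableRel G.Adj]
    (p : ℕ) [Fact p.Prime] (φ : V → Polynomial (ZMod p))
    (hφ : LinearIndependent (ZMod p) φ) (t : ZMod p) (u v : V)
    (htwin : AreTwins G u v)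
    (hne : (φ u).eval t ≠ (φ v).eval t) :
    G.Adj u v ↔
      (φ u).eval t + ∑ w' ∈ G.neighborFinset u, (φ w').eval t =
      (φ v).eval t + ∑ w' ∈ G.neighborFinset v, (φ w').eval t :=
  stmt11_general G p φ t u v htwin hne
end
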